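/- Let d ≥ 0 and 0 ≤ b ≤ d with b ≡ d (mod 2). Then the ℤ-linear map Φ_b is injective and its image T_d^b is contained in T_d; consequently, T_d^b is isomorphic as an abelian group to the direct sum, over all ordered decompositions [d] = B ⊔ A_1 ⊔ ⋯ ⊔ A_{(d−b)/2} with |B| = b and |A_i| = 2 (the pairs listed in order), of the groups T_B. -/

import Mathlib

noncomputable section

/-- The free associative `R`-algebra on noncommuting generators labelled by `Fin k`,
realized as the monoid algebra on the free monoid. -/
abbrev FA (R : Type) [CommRing R] (k : ℕ) : Type := MonoidAlgebra R (FreeMonoid (Fin k))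

/-- A word in the letters `Fin k`, as an element of the free associative algebra. -/
def wordElem (R : Type) [CommRing R] (k : ℕ) (w : List (Fin k)) : FA R k :=
  MonoidAlgebra.single (FreeMonoid.ofList w) 1

/-- `C_{n-1}^{(k)}`: the free `R`-submodule spanned by the injective words of length `n`. -/
def wordsLen (R : Type) [CommRing R] (k n : ℕ) : Submodule R (FA R k) :=
  Submodule.span R {x | ∃ w : List (Fin k), w.Nodup ∧ w.length = n ∧ x = wordElem R k w}

/-- Alternating sum of letter deletions of a single word. -/
def Dword (R : Type) [CommRing R] (k : ℕ) (w : List (Fin k)) : FA R k :=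
  ∑ j : Fin w.length, ((-1 : R) ^ (j : ℕ)) • wordElem R k (w.eraseIdx (j : ℕ))

/-- The differential `D`, extended linearly to the whole free algebra. -/
def Ddiff (R : Type) [CommRing R] (k : ℕ) : FA R k →ₗ[R] FA R k :=
  (Finsupp.lsum R fun w : FreeMonoid (Fin k) =>
    LinearMap.toSpanSingleton R (FA R k) (Dword R k (FreeMonoid.toList w)))
      ∘ₗ (MonoidAlgebra.coeffLinearEquiv R).toLinearMap

/-- For a two-element set `A = {a,b}`, `pairElem A = ab + ba`. -/
def pairElem (d : ℕ) (A : Finset (Fin d)) : FA ℤ d :=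
  ∑ x ∈ A, ∑ y ∈ A.erase x, wordElem ℤ d [x, y]

/-- The free ℤ-module on injective words using exactly the letters of `B`. -/
def wordsOn (d : ℕ) (B : Finset (Fin d)) : Submodule ℤ (FA ℤ d) :=
  Submodule.span ℤ {x | ∃ w : List (Fin d), w.Nodup ∧ w.toFinset = B ∧ x = wordElem ℤ d w}

/-- `T_B`: the kernel of the differential `D` on the words using exactly the letters
of `B` (for `B = ∅` this is `ℤ`, spanned by the empty word). -/
def TT (d : ℕ) (B : Finset (Fin d)) : Submodule ℤ (FA ℤ d) :=
  wordsOn d B ⊓ LinearMap.ker (Ddiff ℤ d)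

/-- An ordered decomposition `C = B ⊔ A₁ ⊔ ⋯ ⊔ A_m` with `|B| = b`, `|A_i| = 2`, the
pairs listed in order (`m = (|C| - b)/2`). -/
structure DecompIdx (d : ℕ) (C : Finset (Fin d)) (b : ℕ) where
  B : Finset (Fin d)
  A : Fin ((C.card - b) / 2) → Finset (Fin d)
  hB : B.card = b
  hA : ∀ i, (A i).card = 2
  hAdisj : ∀ i j, i ≠ j → Disjoint (A i) (A j)
  hBA : ∀ i, Disjoint B (A i)
  hcover : B ∪ Finset.univ.biUnion A = C

noncomputable instance (d : ℕ) (C : Finset (Fin d)) (b : ℕ) :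
    DecidableEq (DecompIdx d C b) := Classical.decEq _

/-- The map `Φ_b^C`: on the summand indexed by the ordered decomposition
`(B; A₁, …, A_m)` it sends `t ∈ T_B` to the product `t · [A₁] · [A₂] ⋯ [A_m]`. -/
def Phi (d : ℕ) (C : Finset (Fin d)) (b : ℕ) :
    DirectSum (DecompIdx d C b) (fun p => ↥(TT d p.B)) →ₗ[ℤ] FA ℤ d :=
  DirectSum.toModule ℤ (DecompIdx d C b) (FA ℤ d) fun p =>
    (LinearMap.mulRight ℤ ((List.ofFn fun i => pairElem d (p.A i)).prod)).comp
      (TT d p.B).subtype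

/-!
`D` is a graded derivation: `D (f * g) = D f * g + (-1) ^ n • (f * D g)` for `f` a combination of
words of length `n`, and `D [A] = 0`. Hence `t * [A₁] ⋯ [Aₘ]` is a cycle, and since `B, A₁, …, Aₘ`
are disjoint it is a combination of injective words on `C`: the image of `Φ_b^C` lies in `T_C`.
For injectivity, read off the coefficient of the word `u ++ A₁.toList ++ ⋯ ++ Aₘ.toList`, with `u`
an injective word on `B`: its first `b` letters recover `B` and its consecutive letter pairs recover
the `Aᵢ`, so only the summand of `(B; A₁, …, Aₘ)` contributes, and it contributes the coefficient
of `u` in that summand.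
-/

section Words

variable {R : Type} [CommRing R] {k : ℕ}

lemma wordElem_append (u v : List (Fin k)) :
    wordElem R k (u ++ v) = wordElem R k u * wordElem R k v := by
  simp [wordElem, MonoidAlgebra.single_mul_single, FreeMonoid.ofList_append]

lemma wordElem_nil : wordElem R k [] = 1 := rfl

lemma wordElem_cons (a : Fin k) (w : List (Fin k)) :
    wordElem R k (a :: w) = wordElem R k [a] * wordElem R k w :=
  wordElem_append [a] w

lemma single_eq_smul_wordElem (m : FreeMonoid (Fin k)) (r : R) :
    MonoidAlgebra.single m r = r • wordElem R k m.toList := by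
  simp [wordElem]

lemma coeff_wordElem (w v : List (Fin k)) :
    (wordElem R k w).coeff (FreeMonoid.ofList v) = if w = v then 1 else 0 := by
  classical
  simp [wordElem, MonoidAlgebra.coeff_single, Finsupp.single_apply]

lemma Dword_nil : Dword R k [] = 0 := rfl

lemma Dword_cons (a : Fin k) (w : List (Fin k)) :
    Dword R k (a :: w) = wordElem R k w - wordElem R k [a] * Dword R k w := by
  change ∑ j : Fin (w.length + 1), (-1 : R) ^ (j : ℕ) • wordElem R k ((a :: w).eraseIdx j) = _
  rw [Fin.sum_univ_succ, Dword, Finset.mul_sum, sub_eq_add_neg, ← Finset.sum_neg_distrib]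
  congr 1
  · simp
  · refine Finset.sum_congr rfl fun j _ => ?_
    rw [Fin.val_succ, List.eraseIdx_cons_succ, wordElem_cons, pow_succ, mul_neg_one, neg_smul,
      mul_smul_comm]

lemma Dword_append (u v : List (Fin k)) :
    Dword R k (u ++ v) = Dword R k u * wordElem R k v +
      (-1 : R) ^ u.length • (wordElem R k u * Dword R k v) := by
  induction u with
  | nil => simp [Dword_nil, wordElem_nil]
  | cons a u ih =>
    rw [List.cons_append, Dword_cons, ih, Dword_cons, wordElem_cons a u, List.length_cons,
      pow_succ]
    simp only [mul_add, sub_mul, mul_smul_comm, mul_assoc, wordElem_append]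
    module

lemma Ddiff_single (m : FreeMonoid (Fin k)) (r : R) :
    Ddiff R k (MonoidAlgebra.single m r) = r • Dword R k m.toList := by
  simp [Ddiff]

lemma Ddiff_wordElem (w : List (Fin k)) : Ddiff R k (wordElem R k w) = Dword R k w := by
  rw [wordElem, Ddiff_single, one_smul, FreeMonoid.toList_ofList]

lemma Ddiff_wordElem_mul (w : List (Fin k)) (g : FA R k) :
    Ddiff R k (wordElem R k w * g) =
      Ddiff R k (wordElem R k w) * g + (-1 : R) ^ w.length • (wordElem R k w * Ddiff R k g) := by
  induction g using MonoidAlgebra.induction_linear with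
  | zero => simp
  | add f g hf hg => simp only [mul_add, map_add, hf, hg, smul_add]; abel
  | single m r =>
    simp only [single_eq_smul_wordElem m r, mul_smul_comm, map_smul, Ddiff_wordElem,
      ← wordElem_append, Dword_append]
    module

end Words

section WordsOn

variable {d : ℕ}

lemma wordsOn_eq_supported (B : Finset (Fin d)) :
    wordsOn d B = MonoidAlgebra.supported ℤ ℤ {m | m.toList.Nodup ∧ m.toList.toFinset = B} := by
  rw [MonoidAlgebra.supported_eq_span_single, wordsOn]
  congr 1
  ext x
  constructor
  · rintro ⟨w, hw, hB, rfl⟩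
    exact ⟨FreeMonoid.ofList w, ⟨hw, hB⟩, rfl⟩
  · rintro ⟨m, ⟨hm, hB⟩, rfl⟩
    exact ⟨m.toList, hm, hB, rfl⟩

lemma coeff_eq_zero_of_mem_wordsOn {B : Finset (Fin d)} {f : FA ℤ d} (hf : f ∈ wordsOn d B)
    {u : List (Fin d)} (hu : ¬(u.Nodup ∧ u.toFinset = B)) :
    f.coeff (FreeMonoid.ofList u) = 0 := by
  rw [wordsOn_eq_supported, MonoidAlgebra.mem_supported'] at hf
  exact hf _ hu

lemma Ddiff_mul_of_mem_wordsOn {B : Finset (Fin d)} {f : FA ℤ d} (hf : f ∈ wordsOn d B)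
    (g : FA ℤ d) :
    Ddiff ℤ d (f * g) = Ddiff ℤ d f * g + (-1 : ℤ) ^ B.card • (f * Ddiff ℤ d g) := by
  induction hf using Submodule.span_induction with
  | mem x hx =>
    obtain ⟨w, hw, hB, rfl⟩ := hx
    rw [Ddiff_wordElem_mul, ← hB, List.toFinset_card_of_nodup hw]
  | zero => simp
  | add x y _ _ hx hy => simp only [add_mul, map_add, hx, hy, smul_add]; abel
  | smul a x _ hx => simp only [smul_mul_assoc, map_smul, hx, smul_add, smul_comm a]

lemma mul_mem_wordsOn {B A : Finset (Fin d)} (hBA : Disjoint B A) {f g : FA ℤ d}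
    (hf : f ∈ wordsOn d B) (hg : g ∈ wordsOn d A) : f * g ∈ wordsOn d (B ∪ A) := by
  have hfg : f * g ∈ wordsOn d B * wordsOn d A := Submodule.mul_mem_mul hf hg
  rw [wordsOn, wordsOn, Submodule.span_mul_span] at hfg
  refine Submodule.span_mono ?_ hfg
  rintro _ ⟨_, ⟨u, hu, rfl, rfl⟩, _, ⟨v, hv, rfl, rfl⟩, rfl⟩
  refine ⟨u ++ v, ?_, List.toFinset_append, (wordElem_append u v).symm⟩
  exact List.nodup_append.mpr ⟨hu, hv, fun x hx y hy => by
    rintro rfl; exact Finset.disjoint_left.mp hBA (List.mem_toFinset.mpr hx)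
      (List.mem_toFinset.mpr hy)⟩

lemma coeff_mul_append_of_mem_wordsOn {B : Finset (Fin d)} {f : FA ℤ d} (hf : f ∈ wordsOn d B)
    (g : FA ℤ d) {u : List (Fin d)} (hu : u.length = B.card) (v : List (Fin d)) :
    (f * g).coeff (FreeMonoid.ofList (u ++ v)) =
      f.coeff (FreeMonoid.ofList u) * g.coeff (FreeMonoid.ofList v) := by
  induction hf using Submodule.span_induction with
  | mem x hx =>
    obtain ⟨w, hw, hB, rfl⟩ := hx
    have hwu : w.length = u.length := by rw [hu, ← hB, List.toFinset_card_of_nodup hw]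
    rw [coeff_wordElem]
    split_ifs with h
    · subst h
      exact MonoidAlgebra.coeff_single_mul_eq_mul_coeff _ fun m _ => by
        simp [FreeMonoid.ofList_append]
    · rw [zero_mul, wordElem]
      refine MonoidAlgebra.coeff_single_mul_of_forall_mul_ne _ _ fun m hm => h ?_
      exact (List.append_inj (congrArg FreeMonoid.toList hm) hwu).1
  | zero => simp
  | add x y _ _ hx hy =>
    rw [add_mul, MonoidAlgebra.coeff_add, Finsupp.add_apply, hx, hy, MonoidAlgebra.coeff_add,
      Finsupp.add_apply, add_mul]
  | smul a x _ hx =>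
    rw [smul_mul_assoc, MonoidAlgebra.coeff_smul_apply, hx, MonoidAlgebra.coeff_smul_apply,
      smul_eq_mul, smul_eq_mul, mul_assoc]

end WordsOn

section Pairs

variable {d : ℕ}

lemma pairElem_pair {a b : Fin d} (hab : a ≠ b) :
    pairElem d {a, b} = wordElem ℤ d [a, b] + wordElem ℤ d [b, a] := by
  simp [pairElem, Finset.sum_pair hab, Finset.erase_insert_eq_erase, hab, hab.symm]

lemma coeff_pairElem {x y : Fin d} (hxy : x ≠ y) (A : Finset (Fin d)) :
    (pairElem d A).coeff (FreeMonoid.ofList [x, y]) = if x ∈ A ∧ y ∈ A then 1 else 0 := by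
  simp_rw [pairElem, MonoidAlgebra.coeff_sum, Finsupp.finsetSum_apply, coeff_wordElem,
    List.cons.injEq, and_true, ite_and]
  simp [Finset.sum_ite_eq', hxy.symm]

lemma coeff_pairElem_toList {A A' : Finset (Fin d)} (hA : A.card = 2) (hA' : A'.card = 2) :
    (pairElem d A).coeff (FreeMonoid.ofList A'.toList) = if A = A' then 1 else 0 := by
  obtain ⟨x, y, hxy⟩ := List.length_eq_two.mp (hA' ▸ Finset.length_toList A')
  have hmem : ∀ z, z ∈ A' ↔ z = x ∨ z = y := by
    intro z; rw [← Finset.mem_toList, hxy]; simp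
  have hne : x ≠ y := by
    have := Finset.nodup_toList A'; rw [hxy] at this; simpa using this
  rw [hxy, coeff_pairElem hne]
  congr 1
  refine propext ⟨fun h => ?_, fun h => ?_⟩
  · refine (Finset.eq_of_subset_of_card_le (fun z hz => ?_) (by rw [hA, hA'])).symm
    rcases (hmem z).mp hz with rfl | rfl
    exacts [h.1, h.2]
  · subst h
    exact ⟨(hmem x).mpr (Or.inl rfl), (hmem y).mpr (Or.inr rfl)⟩

lemma pairElem_mem_wordsOn {A : Finset (Fin d)} (hA : A.card = 2) :
    pairElem d A ∈ wordsOn d A := by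
  obtain ⟨a, b, hab, rfl⟩ := Finset.card_eq_two.mp hA
  rw [pairElem_pair hab]
  refine add_mem (Submodule.subset_span ⟨[a, b], ?_, ?_, rfl⟩)
    (Submodule.subset_span ⟨[b, a], ?_, ?_, rfl⟩)
  all_goals simp [hab, hab.symm, Finset.pair_comm]

lemma Ddiff_pairElem {A : Finset (Fin d)} (hA : A.card = 2) : Ddiff ℤ d (pairElem d A) = 0 := by
  obtain ⟨a, b, hab, rfl⟩ := Finset.card_eq_two.mp hA
  simp [pairElem_pair hab, Ddiff_wordElem, Dword_cons, Dword_nil, wordElem_nil]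

end Pairs

section Products

variable {d : ℕ}

lemma mul_pairElem_mem_TT {B A : Finset (Fin d)} (hA : A.card = 2) (hBA : Disjoint B A)
    {t : FA ℤ d} (ht : t ∈ TT d B) : t * pairElem d A ∈ TT d (B ∪ A) := by
  obtain ⟨htB, htD⟩ := Submodule.mem_inf.mp ht
  refine Submodule.mem_inf.mpr ⟨mul_mem_wordsOn hBA htB (pairElem_mem_wordsOn hA), ?_⟩
  rw [LinearMap.mem_ker] at htD ⊢
  rw [Ddiff_mul_of_mem_wordsOn htB, htD, Ddiff_pairElem hA, zero_mul, mul_zero, smul_zero,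
    add_zero]

lemma mul_prod_pairElem_mem_TT (As : List (Finset (Fin d))) (hAs : ∀ A ∈ As, A.card = 2)
    (hdisj : As.Pairwise Disjoint) {B : Finset (Fin d)} (hB : ∀ A ∈ As, Disjoint B A)
    {t : FA ℤ d} (ht : t ∈ TT d B) :
    t * (As.map (pairElem d)).prod ∈ TT d (B ∪ As.toFinset.biUnion id) := by
  induction As generalizing B t with
  | nil => simpa using ht
  | cons A As ih =>
    rw [List.pairwise_cons] at hdisj
    rw [List.map_cons, List.prod_cons, ← mul_assoc, List.toFinset_cons, Finset.biUnion_insert,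
      id, ← Finset.union_assoc]
    refine ih (fun A' hA' => hAs A' (List.mem_cons_of_mem _ hA')) hdisj.2 (fun A' hA' => ?_)
      (mul_pairElem_mem_TT (hAs A List.mem_cons_self) (hB A List.mem_cons_self) ht)
    exact Finset.disjoint_union_left.mpr ⟨hB A' (List.mem_cons_of_mem _ hA'), hdisj.1 A' hA'⟩

def pairWord (As : List (Finset (Fin d))) : List (Fin d) :=
  (As.map Finset.toList).flatten

lemma coeff_prod_pairElem_pairWord {As As' : List (Finset (Fin d))}
    (hlen : As.length = As'.length) (hAs : ∀ A ∈ As, A.card = 2)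
    (hAs' : ∀ A ∈ As', A.card = 2) :
    ((As.map (pairElem d)).prod).coeff (FreeMonoid.ofList (pairWord As')) =
      if As = As' then 1 else 0 := by
  induction As generalizing As' with
  | nil =>
    cases As' with
    | nil => simp [pairWord]
    | cons => simp at hlen
  | cons A As ih =>
    cases As' with
    | nil => simp at hlen
    | cons A' As' =>
      have hA := hAs A List.mem_cons_self
      have hA' := hAs' A' List.mem_cons_self
      rw [List.map_cons, List.prod_cons, pairWord, List.map_cons, List.flatten_cons,
        coeff_mul_append_of_mem_wordsOn (pairElem_mem_wordsOn hA) _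
          (by rw [Finset.length_toList, hA, hA']),
        coeff_pairElem_toList hA hA', ← pairWord,
        ih (by simpa using hlen) (fun B hB => hAs B (List.mem_cons_of_mem _ hB))
          (fun B hB => hAs' B (List.mem_cons_of_mem _ hB)),
        ite_zero_mul_ite_zero, one_mul]
      simp

end Products

section Decompositions

variable {d : ℕ} {C : Finset (Fin d)} {b : ℕ}

lemma DecompIdx.ext {p q : DecompIdx d C b} (hB : p.B = q.B) (hA : p.A = q.A) : p = q := by
  cases p; cases q; cases hB; cases hA; rfl

lemma DecompIdx.card_eq_two_of_mem_ofFn (p : DecompIdx d C b) :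
    ∀ A ∈ List.ofFn p.A, A.card = 2 := by
  intro A hA
  obtain ⟨i, rfl⟩ := List.mem_ofFn.mp hA
  exact p.hA i

lemma Phi_of (p : DecompIdx d C b) (t : TT d p.B) :
    Phi d C b (DirectSum.of (fun p : DecompIdx d C b => ↥(TT d p.B)) p t) =
      (t : FA ℤ d) * ((List.ofFn p.A).map (pairElem d)).prod := by
  rw [Phi, ← DirectSum.lof_eq_of ℤ, DirectSum.toModule_lof, List.map_ofFn]
  rfl

lemma Phi_of_mem_TT (p : DecompIdx d C b) (t : TT d p.B) :
    Phi d C b (DirectSum.of (fun p : DecompIdx d C b => ↥(TT d p.B)) p t) ∈ TT d C := by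
  have hcover : p.B ∪ (List.ofFn p.A).toFinset.biUnion id = C := by
    refine Eq.trans ?_ p.hcover
    congr 1
    ext x
    simp [List.mem_ofFn]
  have hmem := mul_prod_pairElem_mem_TT (List.ofFn p.A) p.card_eq_two_of_mem_ofFn
    (List.pairwise_ofFn.mpr fun i j hij => p.hAdisj i j hij.ne)
    (fun A hA => by obtain ⟨i, rfl⟩ := List.mem_ofFn.mp hA; exact p.hBA i) t.2
  rwa [hcover, ← Phi_of] at hmem

lemma range_Phi_le_TT : LinearMap.range (Phi d C b) ≤ TT d C := by
  rintro _ ⟨x, rfl⟩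
  induction x using DirectSum.induction_on with
  | zero => simp
  | of p t => exact Phi_of_mem_TT p t
  | add x y hx hy => rw [map_add]; exact add_mem hx hy

lemma coeff_Phi (x : DirectSum (DecompIdx d C b) fun p => ↥(TT d p.B)) (q : DecompIdx d C b)
    {u : List (Fin d)} (hu : u.Nodup ∧ u.toFinset = q.B) :
    (Phi d C b x).coeff (FreeMonoid.ofList (u ++ pairWord (List.ofFn q.A))) =
      (x q : FA ℤ d).coeff (FreeMonoid.ofList u) := by
  classical
  have hterm : ∀ p, (Phi d C b (DirectSum.of _ p (x p))).coeff
      (FreeMonoid.ofList (u ++ pairWord (List.ofFn q.A))) =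
      if p = q then (x q : FA ℤ d).coeff (FreeMonoid.ofList u) else 0 := by
    intro p
    have hxp := (Submodule.mem_inf.mp (x p).2).1
    have hlen : u.length = p.B.card := by
      rw [p.hB, ← q.hB, ← hu.2, List.toFinset_card_of_nodup hu.1]
    rw [Phi_of, coeff_mul_append_of_mem_wordsOn hxp _ hlen,
      coeff_prod_pairElem_pairWord (by simp) p.card_eq_two_of_mem_ofFn q.card_eq_two_of_mem_ofFn]
    by_cases hpq : p = q
    · subst hpq; simp
    · rw [if_neg hpq]
      by_cases hA : p.A = q.A
      · have hB : ¬(u.Nodup ∧ u.toFinset = p.B) := fun h =>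
          hpq (DecompIdx.ext (h.2.symm.trans hu.2) hA)
        rw [coeff_eq_zero_of_mem_wordsOn hxp hB, zero_mul]
      · rw [if_neg (mt List.ofFn_inj.mp hA), mul_zero]
  conv_lhs => rw [← DirectSum.sum_support_of x]
  rw [map_sum, MonoidAlgebra.coeff_sum, Finsupp.finsetSum_apply,
    Finset.sum_congr rfl fun p _ => hterm p, Finset.sum_ite_eq']
  split_ifs with hq
  · rfl
  · rw [DFinsupp.notMem_support_iff.mp hq]
    rfl

theorem Phi_injective : Function.Injective (Phi d C b) := by
  rw [← LinearMap.ker_eq_bot, LinearMap.ker_eq_bot']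
  intro x hx
  ext q m
  change _ = (0 : FA ℤ d).coeff m
  rw [MonoidAlgebra.coeff_zero, Finsupp.zero_apply]
  by_cases hm : m.toList.Nodup ∧ m.toList.toFinset = q.B
  · rw [← FreeMonoid.ofList_toList m, ← coeff_Phi x q hm, hx, MonoidAlgebra.coeff_zero,
      Finsupp.zero_apply]
  · exact coeff_eq_zero_of_mem_wordsOn (Submodule.mem_inf.mp (x q).2).1 hm

end Decompositions

theorem Phi_injective_and_image_in_Td_general (d b : ℕ) :
    Function.Injective (Phi d Finset.univ b) ∧
    LinearMap.range (Phi d Finset.univ b) ≤ TT d Finset.univ ∧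
    Nonempty ((DirectSum (DecompIdx d Finset.univ b) fun p => ↥(TT d p.B)) ≃ₗ[ℤ]
      ↥(LinearMap.range (Phi d Finset.univ b))) :=
  ⟨Phi_injective, range_Phi_le_TT, ⟨LinearEquiv.ofInjective _ Phi_injective⟩⟩

/-- `Φ_b (= Φ_b^{[d]})` is injective, its image `T_d^b` is contained in `T_d`, and hence
`T_d^b` is isomorphic to the direct sum over ordered decompositions of the groups `T_B`. -/
theorem Phi_injective_and_image_in_Td (d b : ℕ) (hb : b ≤ d) (hpar : b % 2 = d % 2) :
    Function.Injective (Phi d Finset.univ b) ∧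
    LinearMap.range (Phi d Finset.univ b) ≤ TT d Finset.univ ∧
    Nonempty ((DirectSum (DecompIdx d Finset.univ b) fun p => ↥(TT d p.B)) ≃ₗ[ℤ]
      ↥(LinearMap.range (Phi d Finset.univ b))) :=
  Phi_injective_and_image_in_Td_general d b
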